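/- Let 1 ≤ p ≤ q < ∞, let k ≥ 1, and let M > 0. Suppose that for every n ≥ k and every function f : {-1,1}^n → ℝ, inf_{g ∈ P_{>k}^n} ‖f − g‖_{p*} ≤ M · inf_{g ∈ P_{>k}^n} ‖f − g‖_{q*}, where r* denotes the conjugate exponent of r ∈ [1,∞]. Then for every n ≥ k, every function f : {-1,1}^n → ℝ of degree at most k satisfies ‖f‖_q ≤ M ‖f‖_p. -/

import Mathlib

open Finset
open scoped ENNReal

noncomputable section

/-- The Walsh function `w_S` on the discrete cube `{-1,1}^n`, where a point of the cube is
encoded as `x : Fin n → Bool`, a coordinate `b : Bool` representing the real number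
`if b then 1 else -1`. -/
def walsh (n : ℕ) (S : Finset (Fin n)) (x : Fin n → Bool) : ℝ :=
  ∏ i ∈ S, (if x i then (1 : ℝ) else -1)

/-- The Fourier--Walsh coefficient `f̂(S) = E[f ⬝ w_S]`. -/
def walshCoeff {n : ℕ} (f : (Fin n → Bool) → ℝ) (S : Finset (Fin n)) : ℝ :=
  (∑ x : Fin n → Bool, f x * walsh n S x) / 2 ^ n

/-- The mean `E f` of `f` with respect to the uniform probability measure on the cube. -/
def cubeMean {n : ℕ} (f : (Fin n → Bool) → ℝ) : ℝ :=
  (∑ x : Fin n → Bool, f x) / 2 ^ n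

/-- The `L_r` norm (`r ∈ [1,∞]`, encoded as `r : ℝ≥0∞`) of `f : {-1,1}^n → ℝ` with respect to
the uniform probability measure; `r = ∞` gives the sup norm. -/
def cubeNorm {n : ℕ} (r : ℝ≥0∞) (f : (Fin n → Bool) → ℝ) : ℝ :=
  if r = ⊤ then Finset.univ.sup' Finset.univ_nonempty (fun x => |f x|)
  else ((∑ x : Fin n → Bool, |f x| ^ r.toReal) / 2 ^ n) ^ (1 / r.toReal)

/-- `f ∈ 𝒫_I^n`: the Fourier--Walsh spectrum of `f` is contained in `I`. -/
def spectrumIn {n : ℕ} (f : (Fin n → Bool) → ℝ) (I : Set ℕ) : Prop :=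
  ∀ S : Finset (Fin n), S.card ∉ I → walshCoeff f S = 0

/-- The `L_r` distance of `f` from the tail space `𝒫_{>k}^n`. -/
def distFromTail {n : ℕ} (k : ℕ) (r : ℝ≥0∞) (f : (Fin n → Bool) → ℝ) : ℝ :=
  sInf {t : ℝ | ∃ g : (Fin n → Bool) → ℝ,
    spectrumIn g {j | k < j} ∧ t = cubeNorm r (fun x => f x - g x)}

/-- The coefficient `c(k,ℓ)` of `x^ℓ` in the `k`-th Chebyshev polynomial of the first kind. -/
def chebC (k ℓ : ℕ) : ℝ := (Polynomial.Chebyshev.T ℝ k).coeff ℓ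

/-- The modified Chebyshev coefficient `c̃(k,ℓ)`. -/
def chebCt (k ℓ : ℕ) : ℝ := if Even (k - ℓ) then chebC k ℓ else chebC (k - 1) ℓ

/-- The `ℓ`-th elementary symmetric multilinear polynomial on `{-1,1}^n`. -/
def elemSymPoly (n ℓ : ℕ) (x : Fin n → Bool) : ℝ :=
  ∑ S ∈ Finset.powersetCard ℓ (Finset.univ : Finset (Fin n)), walsh n S x

/-- The level-`ℓ` Rademacher projection `Rad_ℓ f`. -/
def radProj {n : ℕ} (ℓ : ℕ) (f : (Fin n → Bool) → ℝ) (x : Fin n → Bool) : ℝ :=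
  ∑ S ∈ Finset.powersetCard ℓ (Finset.univ : Finset (Fin n)), walshCoeff f S * walsh n S x

lemma sum_walsh_walsh {n : ℕ} (y x : Fin n → Bool) :
    ∑ S : Finset (Fin n), walsh n S y * walsh n S x = if y = x then (2:ℝ)^n else 0 := by
  have key : ∀ S : Finset (Fin n), walsh n S y * walsh n S x
      = ∏ i ∈ S, ((if y i then (1:ℝ) else -1) * (if x i then (1:ℝ) else -1)) := by
    intro S; rw [walsh, walsh, Finset.prod_mul_distrib]
  simp only [key]
  have h2 : ∑ S : Finset (Fin n),
      ∏ i ∈ S, ((if y i then (1:ℝ) else -1) * (if x i then (1:ℝ) else -1))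
      = ∏ i : Fin n, (((if y i then (1:ℝ) else -1) * (if x i then (1:ℝ) else -1)) + 1) := by
    rw [Fintype.prod_add]
    simp
  rw [h2]
  by_cases hxy : y = x
  · subst hxy
    simp only [if_pos rfl]
    have : ∀ i : Fin n, ((if y i then (1:ℝ) else -1) * (if y i then (1:ℝ) else -1)) + 1 = 2 := by
      intro i; cases (y i) <;> norm_num
    rw [Finset.prod_congr rfl fun i _ => this i]
    simp
  · rw [if_neg hxy]
    obtain ⟨i, hi⟩ : ∃ i, y i ≠ x i := by
      by_contra hc; push_neg at hc; exact hxy (funext hc)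
    apply Finset.prod_eq_zero (Finset.mem_univ i)
    cases hy : y i <;> cases hx : x i <;> simp [hy, hx] at hi ⊢ <;> norm_num

lemma walsh_inversion {n : ℕ} (f : (Fin n → Bool) → ℝ) (x : Fin n → Bool) :
    f x = ∑ S : Finset (Fin n), walshCoeff f S * walsh n S x := by
  have h2n : ((2:ℝ)^n) ≠ 0 := by positivity
  simp only [walshCoeff, div_mul_eq_mul_div, Finset.sum_mul]
  rw [← Finset.sum_div, Finset.sum_comm]
  have : ∀ y : Fin n → Bool,
      ∑ S : Finset (Fin n), f y * walsh n S y * walsh n S x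
      = f y * (if y = x then (2:ℝ)^n else 0) := by
    intro y
    rw [← sum_walsh_walsh y x, Finset.mul_sum]
    simp [mul_assoc]
  simp only [this]
  simp only [mul_ite, mul_zero]
  rw [Finset.sum_ite_eq' Finset.univ x (fun y => f y * (2:ℝ)^n)]
  simp [h2n]

lemma sum_mul_eq_zero {n k : ℕ} {f g : (Fin n → Bool) → ℝ}
    (hf : spectrumIn f {j | j ≤ k}) (hg : spectrumIn g {j | k < j}) :
    ∑ x : Fin n → Bool, f x * g x = 0 := by
  have h2n : ((2:ℝ)^n) ≠ 0 := by positivity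
  have step1 : ∀ x : Fin n → Bool, f x * g x
      = ∑ S : Finset (Fin n), walshCoeff f S * (walsh n S x * g x) := by
    intro x
    rw [show f x * g x = (∑ S : Finset (Fin n), walshCoeff f S * walsh n S x) * g x by
      rw [← walsh_inversion], Finset.sum_mul]
    simp [mul_assoc]
  simp only [step1]
  rw [Finset.sum_comm]
  apply Finset.sum_eq_zero
  intro S _
  rw [← Finset.mul_sum]
  by_cases hS : S.card ≤ k
  · have hc : walshCoeff g S = 0 := hg S (by simpa using not_lt.mpr hS)
    have : ∑ x : Fin n → Bool, walsh n S x * g x = 0 := by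
      have := hc
      rw [walshCoeff, div_eq_zero_iff] at this
      rcases this with h | h
      · rw [← h]; apply Finset.sum_congr rfl; intro x _; ring
      · exact absurd h h2n
    rw [this, mul_zero]
  · have : walshCoeff f S = 0 := hf S (by simpa using hS)
    rw [this, zero_mul]

lemma cubeNorm_nonneg {n : ℕ} (r : ℝ≥0∞) (f : (Fin n → Bool) → ℝ) : 0 ≤ cubeNorm r f := by
  rw [cubeNorm]
  split
  · exact le_trans (abs_nonneg (f (fun _ : Fin n => true)))
      (Finset.le_sup' (fun x => |f x|) (Finset.mem_univ (fun _ : Fin n => true)))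
  · apply Real.rpow_nonneg
    apply div_nonneg _ (by positivity)
    exact Finset.sum_nonneg fun x _ => Real.rpow_nonneg (abs_nonneg _) _

lemma spectrumIn_zero {n : ℕ} (I : Set ℕ) : spectrumIn (fun _ : Fin n → Bool => (0:ℝ)) I := by
  intro S _; simp [walshCoeff]

lemma distFromTail_nonempty {n : ℕ} (k : ℕ) (r : ℝ≥0∞) (f : (Fin n → Bool) → ℝ) :
    {t : ℝ | ∃ g : (Fin n → Bool) → ℝ,
      spectrumIn g {j | k < j} ∧ t = cubeNorm r (fun x => f x - g x)}.Nonempty :=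
  ⟨cubeNorm r f, fun _ => 0, spectrumIn_zero _, by simp⟩

lemma distFromTail_bddBelow {n : ℕ} (k : ℕ) (r : ℝ≥0∞) (f : (Fin n → Bool) → ℝ) :
    BddBelow {t : ℝ | ∃ g : (Fin n → Bool) → ℝ,
      spectrumIn g {j | k < j} ∧ t = cubeNorm r (fun x => f x - g x)} := by
  refine ⟨0, fun t ht => ?_⟩
  obtain ⟨g, _, rfl⟩ := ht
  exact cubeNorm_nonneg _ _

lemma distFromTail_le_cubeNorm {n : ℕ} (k : ℕ) (r : ℝ≥0∞) (f : (Fin n → Bool) → ℝ) :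
    distFromTail k r f ≤ cubeNorm r f := by
  apply csInf_le (distFromTail_bddBelow k r f)
  exact ⟨fun _ => 0, spectrumIn_zero _, by simp⟩

lemma distFromTail_nonneg {n : ℕ} (k : ℕ) (r : ℝ≥0∞) (f : (Fin n → Bool) → ℝ) :
    0 ≤ distFromTail k r f := by
  apply le_csInf (distFromTail_nonempty k r f)
  rintro t ⟨g, _, rfl⟩
  exact cubeNorm_nonneg _ _

lemma conj_cases {r : ℝ} (hr : 1 ≤ r) {rs : ℝ≥0∞} (h : (ENNReal.ofReal r)⁻¹ + rs⁻¹ = 1) :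
    (r = 1 ∧ rs = ⊤) ∨ (1 < r ∧ rs = ENNReal.ofReal (r / (r - 1))) := by
  rcases eq_or_lt_of_le hr with hr1 | hr1
  · left
    refine ⟨hr1.symm, ?_⟩
    rw [← hr1, ENNReal.ofReal_one, inv_one] at h
    have h0 : rs⁻¹ = 0 := by
      have h' : (1:ℝ≥0∞) + rs⁻¹ = 1 + 0 := by simpa using h
      exact (ENNReal.add_right_inj (by simp)).mp h'
    exact ENNReal.inv_eq_zero.mp h0
  · right
    refine ⟨hr1, ?_⟩
    have hconj : Real.HolderConjugate r (r / (r - 1)) := Real.HolderConjugate.conjExponent hr1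
    have h2 := hconj.inv_add_inv_ennreal
    have hfin : (ENNReal.ofReal r)⁻¹ ≠ ⊤ := by
      simp only [Ne, ENNReal.inv_eq_top, ENNReal.ofReal_eq_zero, not_le]
      exact hconj.pos
    have : rs⁻¹ = (ENNReal.ofReal (r / (r - 1)))⁻¹ :=
      (ENNReal.add_right_inj hfin).mp (h.trans h2.symm)
    exact inv_inj.mp this

lemma cube_holder {n : ℕ} {r : ℝ} (hr : 1 ≤ r) {rs : ℝ≥0∞}
    (h : (ENNReal.ofReal r)⁻¹ + rs⁻¹ = 1) (u v : (Fin n → Bool) → ℝ) :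
    (∑ x : Fin n → Bool, u x * v x) / 2 ^ n
      ≤ cubeNorm (ENNReal.ofReal r) u * cubeNorm rs v := by
  have h2n : (0:ℝ) < 2 ^ n := by positivity
  rcases conj_cases hr h with ⟨hr1, hrs⟩ | ⟨hr1, hrs⟩
  · subst hr1; subst hrs
    have hu : cubeNorm (ENNReal.ofReal 1) u = (∑ x : Fin n → Bool, |u x|) / 2 ^ n := by
      rw [cubeNorm, if_neg (by simp), ENNReal.ofReal_one, ENNReal.toReal_one]
      simp
    have hv : cubeNorm (⊤ : ℝ≥0∞) v
        = Finset.univ.sup' Finset.univ_nonempty (fun x => |v x|) := by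
      rw [cubeNorm, if_pos rfl]
    rw [hu, hv]
    set Mv := Finset.univ.sup' Finset.univ_nonempty (fun x => |v x|) with hMv
    have hMv0 : 0 ≤ Mv := le_trans (abs_nonneg (v (fun _ : Fin n => true)))
      (Finset.le_sup' (fun x => |v x|) (Finset.mem_univ _))
    have key : ∑ x : Fin n → Bool, u x * v x ≤ (∑ x : Fin n → Bool, |u x|) * Mv := by
      rw [Finset.sum_mul]
      apply Finset.sum_le_sum
      intro x _
      calc u x * v x ≤ |u x * v x| := le_abs_self _
        _ = |u x| * |v x| := abs_mul _ _
        _ ≤ |u x| * Mv := by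
            apply mul_le_mul_of_nonneg_left _ (abs_nonneg _)
            exact Finset.le_sup' (fun x => |v x|) (Finset.mem_univ x)
    rw [div_mul_eq_mul_div]
    exact div_le_div_of_nonneg_right key h2n.le |>.trans_eq rfl
  · have hconj : Real.HolderConjugate r (r / (r - 1)) := Real.HolderConjugate.conjExponent hr1
    set r' := r / (r - 1) with hr'
    subst hrs
    have htr : (ENNReal.ofReal r).toReal = r := ENNReal.toReal_ofReal hconj.nonneg
    have htr' : (ENNReal.ofReal r').toReal = r' := ENNReal.toReal_ofReal hconj.symm.nonneg
    have hu : cubeNorm (ENNReal.ofReal r) u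
        = ((∑ x : Fin n → Bool, |u x| ^ r) / 2 ^ n) ^ (1 / r) := by
      rw [cubeNorm, if_neg (by simp), htr]
    have hv : cubeNorm (ENNReal.ofReal r') v
        = ((∑ x : Fin n → Bool, |v x| ^ r') / 2 ^ n) ^ (1 / r') := by
      rw [cubeNorm, if_neg (by simp), htr']
    rw [hu, hv]
    set A := ∑ x : Fin n → Bool, |u x| ^ r with hA
    set B := ∑ x : Fin n → Bool, |v x| ^ r' with hB
    have hA0 : 0 ≤ A := Finset.sum_nonneg fun x _ => Real.rpow_nonneg (abs_nonneg _) _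
    have hB0 : 0 ≤ B := Finset.sum_nonneg fun x _ => Real.rpow_nonneg (abs_nonneg _) _
    have hrw : (A / 2 ^ n) ^ (1 / r) * (B / 2 ^ n) ^ (1 / r')
        = (A ^ (1 / r) * B ^ (1 / r')) / 2 ^ n := by
      rw [Real.div_rpow hA0 h2n.le, Real.div_rpow hB0 h2n.le]
      rw [div_mul_div_comm, ← Real.rpow_add h2n]
      rw [show 1 / r + 1 / r' = 1 by
        rw [one_div, one_div]; exact hconj.inv_add_inv_eq_one]
      rw [Real.rpow_one]
    rw [hrw]
    apply div_le_div_of_nonneg_right _ h2n.le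
    exact Real.inner_le_Lp_mul_Lq Finset.univ u v hconj

/-- the dual inequality for distances from the tail space `𝒫_{>k}^n` implies
the moment comparison inequality for degree-at-most-`k` polynomials. -/
theorem stmt_1 (p q : ℝ) (hp : 1 ≤ p) (hpq : p ≤ q) (k : ℕ) (hk : 1 ≤ k)
    (M : ℝ) (hM : 0 < M) (pstar qstar : ℝ≥0∞)
    (hps : (ENNReal.ofReal p)⁻¹ + pstar⁻¹ = 1)
    (hqs : (ENNReal.ofReal q)⁻¹ + qstar⁻¹ = 1)
    (hdual : ∀ n : ℕ, k ≤ n → ∀ f : (Fin n → Bool) → ℝ,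
      distFromTail k pstar f ≤ M * distFromTail k qstar f) :
    ∀ n : ℕ, k ≤ n → ∀ f : (Fin n → Bool) → ℝ,
      spectrumIn f {j | j ≤ k} →
      cubeNorm (ENNReal.ofReal q) f ≤ M * cubeNorm (ENNReal.ofReal p) f := by
  intro n hn f hf
  have h2n : (0:ℝ) < 2 ^ n := by positivity
  have hq1 : 1 ≤ q := le_trans hp hpq
  set Nq := cubeNorm (ENNReal.ofReal q) f with hNq
  set Np := cubeNorm (ENNReal.ofReal p) f with hNp
  by_cases hNqpos : Nq ≤ 0
  · exact le_trans hNqpos (mul_nonneg hM.le (cubeNorm_nonneg _ _))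
  push_neg at hNqpos
  have htq : (ENNReal.ofReal q).toReal = q := ENNReal.toReal_ofReal (by linarith)
  have htp : (ENNReal.ofReal p).toReal = p := ENNReal.toReal_ofReal (by linarith)
  have hNqf : Nq = ((∑ x : Fin n → Bool, |f x| ^ q) / 2 ^ n) ^ (1 / q) := by
    rw [hNq, cubeNorm, if_neg (by simp), htq]
  have hNpf : Np = ((∑ x : Fin n → Bool, |f x| ^ p) / 2 ^ n) ^ (1 / p) := by
    rw [hNp, cubeNorm, if_neg (by simp), htp]
  have hAq0 : 0 ≤ ∑ x : Fin n → Bool, |f x| ^ q :=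
    Finset.sum_nonneg fun x _ => Real.rpow_nonneg (abs_nonneg _) _
  have hNppos : 0 < Np := by
    rcases lt_or_eq_of_le (cubeNorm_nonneg (ENNReal.ofReal p) f) with h0 | h0
    · exact h0
    exfalso
    have hbase : (∑ x : Fin n → Bool, |f x| ^ p) / 2 ^ n = 0 := by
      have h1 : ((∑ x : Fin n → Bool, |f x| ^ p) / 2 ^ n) ^ (1 / p) = 0 := by
        rw [← hNpf]; exact h0.symm
      have hb0 : 0 ≤ (∑ x : Fin n → Bool, |f x| ^ p) / 2 ^ n :=
        div_nonneg (Finset.sum_nonneg fun x _ => Real.rpow_nonneg (abs_nonneg _) _) h2n.le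
      exact (Real.rpow_eq_zero hb0 (by positivity)).mp h1
    have hsum : ∑ x : Fin n → Bool, |f x| ^ p = 0 := by
      field_simp at hbase; simpa using hbase
    have hfz : ∀ x : Fin n → Bool, f x = 0 := by
      intro x
      have hx := (Finset.sum_eq_zero_iff_of_nonneg
        (fun x _ => Real.rpow_nonneg (abs_nonneg (f x)) p)).mp hsum x (Finset.mem_univ x)
      have : |f x| = 0 := by
        by_contra hne
        have : 0 < |f x| := lt_of_le_of_ne (abs_nonneg _) (Ne.symm hne)
        exact absurd hx (ne_of_gt (Real.rpow_pos_of_pos this p))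
      exact abs_eq_zero.mp this
    have : Nq = 0 := by
      rw [hNqf]
      have : ∀ x : Fin n → Bool, |f x| ^ q = 0 := by
        intro x; rw [hfz x, abs_zero, Real.zero_rpow (by linarith)]
      rw [Finset.sum_congr rfl fun x _ => this x]
      simp
      exact Real.zero_rpow (by positivity)
    linarith
  suffices hsuff : ∃ h : (Fin n → Bool) → ℝ,
      Nq ≤ (∑ x : Fin n → Bool, f x * h x) / 2 ^ n ∧ cubeNorm qstar h ≤ 1 by
    obtain ⟨h, hfh, hh1⟩ := hsuff
    have key : ∀ g : (Fin n → Bool) → ℝ, spectrumIn g {j | k < j} →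
        Nq ≤ Np * cubeNorm pstar (fun x => h x - g x) := by
      intro g hg
      have horth : ∑ x : Fin n → Bool, f x * g x = 0 := sum_mul_eq_zero hf hg
      have heq : (∑ x : Fin n → Bool, f x * (h x - g x)) / 2 ^ n
          = (∑ x : Fin n → Bool, f x * h x) / 2 ^ n := by
        simp only [mul_sub]
        rw [Finset.sum_sub_distrib, horth, sub_zero]
      calc Nq ≤ (∑ x : Fin n → Bool, f x * h x) / 2 ^ n := hfh
        _ = (∑ x : Fin n → Bool, f x * (h x - g x)) / 2 ^ n := heq.symm
        _ ≤ Np * cubeNorm pstar (fun x => h x - g x) :=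
            cube_holder hp hps f (fun x => h x - g x)
    have hstep : Nq / Np ≤ distFromTail k pstar h := by
      apply le_csInf (distFromTail_nonempty _ _ _)
      rintro t ⟨g, hg, rfl⟩
      rw [div_le_iff₀ hNppos, mul_comm]
      exact key g hg
    have hfinal : Nq / Np ≤ M := by
      calc Nq / Np ≤ distFromTail k pstar h := hstep
        _ ≤ M * distFromTail k qstar h := hdual n hn h
        _ ≤ M * cubeNorm qstar h :=
            mul_le_mul_of_nonneg_left (distFromTail_le_cubeNorm _ _ _) hM.le
        _ ≤ M * 1 := mul_le_mul_of_nonneg_left hh1 hM.le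
        _ = M := mul_one M
    rw [div_le_iff₀ hNppos] at hfinal
    linarith
  rcases conj_cases hq1 hqs with ⟨hq1', hqs'⟩ | ⟨hq1', hqs'⟩
  · -- q = 1, qstar = ⊤
    refine ⟨fun x => if 0 ≤ f x then (1:ℝ) else -1, ?_, ?_⟩
    · have hterm : ∀ x : Fin n → Bool,
          f x * (if 0 ≤ f x then (1:ℝ) else -1) = |f x| := by
        intro x
        by_cases hx : 0 ≤ f x
        · rw [if_pos hx, mul_one, abs_of_nonneg hx]
        · rw [if_neg hx, abs_of_neg (not_le.mp hx)]; ring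
      rw [Finset.sum_congr rfl fun x _ => hterm x]
      rw [hNqf, hq1']
      simp
    · rw [hqs', cubeNorm, if_pos rfl]
      apply Finset.sup'_le
      intro x _
      by_cases hx : 0 ≤ f x <;> simp [hx]
  · -- 1 < q
    have hqc : Real.HolderConjugate q (q / (q - 1)) := Real.HolderConjugate.conjExponent hq1'
    set q' := q / (q - 1) with hq'def
    have htq' : (ENNReal.ofReal q').toReal = q' := ENNReal.toReal_ofReal hqc.symm.nonneg
    have hNqq : Nq ^ q = (∑ x : Fin n → Bool, |f x| ^ q) / 2 ^ n := by
      rw [hNqf, ← Real.rpow_mul (div_nonneg hAq0 h2n.le), one_div,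
        inv_mul_cancel₀ hqc.ne_zero, Real.rpow_one]
    have hNqqpos : 0 < Nq ^ q := Real.rpow_pos_of_pos hNqpos q
    refine ⟨fun x => (if 0 ≤ f x then (1:ℝ) else -1) * |f x| ^ (q - 1) / Nq ^ (q - 1), ?_, ?_⟩
    · have hterm : ∀ x : Fin n → Bool,
          f x * ((if 0 ≤ f x then (1:ℝ) else -1) * |f x| ^ (q - 1) / Nq ^ (q - 1))
          = |f x| ^ q / Nq ^ (q - 1) := by
        intro x
        have hsgn : f x * (if 0 ≤ f x then (1:ℝ) else -1) = |f x| := by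
          by_cases hx : 0 ≤ f x
          · rw [if_pos hx, mul_one, abs_of_nonneg hx]
          · rw [if_neg hx, abs_of_neg (not_le.mp hx)]; ring
        have habs : |f x| * |f x| ^ (q - 1) = |f x| ^ q := by
          by_cases hx : f x = 0
          · rw [hx, abs_zero, Real.zero_rpow (by linarith), zero_mul,
              Real.zero_rpow (by linarith)]
          · have hpos : 0 < |f x| := abs_pos.mpr hx
            have hadd := Real.rpow_add hpos 1 (q - 1)
            rw [show (1:ℝ) + (q - 1) = q by ring, Real.rpow_one] at hadd
            exact hadd.symm
        rw [div_eq_mul_inv, div_eq_mul_inv, ← mul_assoc, ← mul_assoc, hsgn, habs]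
      rw [Finset.sum_congr rfl fun x _ => hterm x, ← Finset.sum_div]
      rw [div_div, mul_comm (Nq ^ (q-1)) ((2:ℝ)^n), ← div_div, ← hNqq]
      rw [← Real.rpow_sub hNqpos, show q - (q - 1) = 1 by ring, Real.rpow_one]
    · rw [hqs', cubeNorm, if_neg (by simp), htq']
      have hNq1pos : 0 < Nq ^ (q - 1) := Real.rpow_pos_of_pos hNqpos _
      have habs : ∀ x : Fin n → Bool,
          |(if 0 ≤ f x then (1:ℝ) else -1) * |f x| ^ (q - 1) / Nq ^ (q - 1)| ^ q'
          = |f x| ^ q / Nq ^ q := by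
        intro x
        have h1 : |(if 0 ≤ f x then (1:ℝ) else -1) * |f x| ^ (q - 1) / Nq ^ (q - 1)|
            = |f x| ^ (q - 1) / Nq ^ (q - 1) := by
          rw [abs_div, abs_mul]
          rw [abs_of_nonneg (Real.rpow_nonneg (abs_nonneg _) _),
            abs_of_pos hNq1pos]
          by_cases hx : 0 ≤ f x <;> simp [hx]
        rw [h1, Real.div_rpow (Real.rpow_nonneg (abs_nonneg _) _) hNq1pos.le]
        rw [← Real.rpow_mul (abs_nonneg _), ← Real.rpow_mul hNqpos.le]
        rw [hqc.sub_one_mul_conj]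
      rw [Finset.sum_congr rfl fun x _ => habs x, ← Finset.sum_div]
      rw [div_div, mul_comm (Nq ^ q) ((2:ℝ)^n), ← div_div, ← hNqq]
      rw [div_self hNqqpos.ne', Real.one_rpow]
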